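/- Let m ≥ 1, let L̂ be the m×m real lower unitriangular matrix with L̂_{ij} = −1 for all i > j, and let Û be any invertible m×m real upper triangular matrix. Then for all indices i, j with 1 ≤ i, j ≤ m, the entries of (L̂Û)⁻¹ satisfy ((L̂Û)⁻¹)_{ji} = (Û⁻¹)_{ji} + Σ_{k=i+1}^{m} 2^{k−i−1}·(Û⁻¹)_{jk}. -/

import Mathlib

open Matrix

/-- The `m × m` lower unitriangular matrix with all strictly lower entries `-1`. -/
def highamLhat (m : ℕ) : Matrix (Fin m) (Fin m) ℝ :=
  Matrix.of fun i j => if j < i then -1 else if i = j then 1 else 0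

/-- The matrix is upper triangular. -/
def IsUpperTri {k : ℕ} (M : Matrix (Fin k) (Fin k) ℝ) : Prop :=
  ∀ i j : Fin k, j < i → M i j = 0

/-- Candidate inverse of `highamLhat`. -/
def highamM (m : ℕ) : Matrix (Fin m) (Fin m) ℝ :=
  Matrix.of fun k i => if k = i then 1 else if i < k then 2 ^ ((k : ℕ) - (i : ℕ) - 1) else 0

lemma key_sum (b : ℕ) : ∀ a : ℕ, b < a →
    (Finset.range a).sum
      (fun k => if k = b then (1:ℝ) else if b < k then 2 ^ (k - b - 1) else 0)
      = 2 ^ (a - b - 1) := by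
  intro a
  induction a with
  | zero => omega
  | succ n ih =>
    intro hb
    rw [Finset.sum_range_succ]
    rcases Nat.lt_or_ge b n with h | h
    · rw [ih h]
      have heq : n - b - 1 + 1 = n + 1 - b - 1 := by omega
      rw [if_neg (by omega : ¬ n = b), if_pos h, ← heq, pow_succ]
      ring
    · have hbn : b = n := by omega
      subst hbn
      rw [if_pos rfl]
      have hz : (Finset.range b).sum
          (fun k => if k = b then (1:ℝ) else if b < k then 2 ^ (k - b - 1) else 0) = 0 := by
        apply Finset.sum_eq_zero
        intro x hx
        simp only [Finset.mem_range] at hx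
        rw [if_neg (by omega), if_neg (by omega)]
      rw [hz]; simp

lemma nat_key (m a b : ℕ) (ha : a < m) :
    (Finset.range m).sum
      (fun k => (if k < a then (-1:ℝ) else if a = k then 1 else 0) *
        (if k = b then 1 else if b < k then 2 ^ (k - b - 1) else 0))
      = if a = b then 1 else 0 := by
  have hsplit : Finset.range m = Finset.range (a+1) ∪ Finset.Ico (a+1) m := by
    rw [Finset.range_eq_Ico, Finset.range_eq_Ico, Finset.Ico_union_Ico_eq_Ico (Nat.zero_le (a+1)) (by omega : a + 1 ≤ m)]
  rw [hsplit, Finset.sum_union (by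
    simp only [Finset.disjoint_left, Finset.mem_range, Finset.mem_Ico]; omega)]
  have h2 : (Finset.Ico (a+1) m).sum
      (fun k => (if k < a then (-1:ℝ) else if a = k then 1 else 0) *
        (if k = b then 1 else if b < k then 2 ^ (k - b - 1) else 0)) = 0 := by
    apply Finset.sum_eq_zero
    intro x hx
    simp only [Finset.mem_Ico] at hx
    rw [if_neg (by omega), if_neg (by omega), zero_mul]
  rw [h2, add_zero, Finset.sum_range_succ, if_neg (lt_irrefl a), if_pos rfl, one_mul]
  have h1 : (Finset.range a).sum
      (fun k => (if k < a then (-1:ℝ) else if a = k then 1 else 0) *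
        (if k = b then 1 else if b < k then 2 ^ (k - b - 1) else 0))
      = -((Finset.range a).sum
        (fun k => if k = b then (1:ℝ) else if b < k then 2 ^ (k - b - 1) else 0)) := by
    rw [← Finset.sum_neg_distrib]
    apply Finset.sum_congr rfl
    intro x hx
    simp only [Finset.mem_range] at hx
    rw [if_pos hx]; ring
  rw [h1]
  rcases lt_trichotomy a b with h | h | h
  · have hS : (Finset.range a).sum
        (fun k => if k = b then (1:ℝ) else if b < k then 2 ^ (k - b - 1) else 0) = 0 := by
      apply Finset.sum_eq_zero
      intro x hx
      simp only [Finset.mem_range] at hx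
      rw [if_neg (by omega), if_neg (by omega)]
    rw [hS, if_neg (by omega : ¬ a = b), if_neg (by omega : ¬ b < a),
      if_neg (by omega : ¬ a = b)]
    ring
  · subst h
    have hS : (Finset.range a).sum
        (fun k => if k = a then (1:ℝ) else if a < k then 2 ^ (k - a - 1) else 0) = 0 := by
      apply Finset.sum_eq_zero
      intro x hx
      simp only [Finset.mem_range] at hx
      rw [if_neg (by omega), if_neg (by omega)]
    rw [hS, if_pos rfl, if_pos rfl]
    ring
  · rw [key_sum b a h, if_neg (by omega : ¬ a = b), if_neg (by omega : ¬ a = b),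
      if_pos h]
    ring

lemma highamM_inv (m : ℕ) : highamLhat m * highamM m = 1 := by
  ext a b
  rw [Matrix.mul_apply]
  simp only [highamLhat, highamM, Matrix.of_apply, Matrix.one_apply]
  set f : ℕ → ℝ := fun k => (if k < (a:ℕ) then (-1:ℝ) else if (a:ℕ) = k then 1 else 0) *
      (if k = (b:ℕ) then 1 else if (b:ℕ) < k then 2 ^ (k - (b:ℕ) - 1) else 0) with hf
  calc (∑ x : Fin m, (if x < a then (-1:ℝ) else if a = x then 1 else 0) *
          (if x = b then 1 else if b < x then 2 ^ ((x:ℕ) - (b:ℕ) - 1) else 0))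
      = ∑ x : Fin m, f (x:ℕ) := by
        apply Finset.sum_congr rfl
        intro x _
        rw [hf]
        simp only [Fin.lt_def, Fin.ext_iff]
    _ = ∑ k ∈ Finset.range m, f k := Fin.sum_univ_eq_sum_range f m
    _ = if (a:ℕ) = (b:ℕ) then 1 else 0 := nat_key m a b a.isLt
    _ = if a = b then 1 else 0 := by
        rcases eq_or_ne a b with h | h
        · subst h; simp
        · rw [if_neg (fun hh => h (Fin.ext hh)), if_neg h]

theorem stmt_9 {m : ℕ} (hm : 1 ≤ m)
    (Uhat : Matrix (Fin m) (Fin m) ℝ) (hUhat : IsUpperTri Uhat) (hUdet : IsUnit Uhat.det)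
    (i j : Fin m) :
    (highamLhat m * Uhat)⁻¹ j i
      = Uhat⁻¹ j i
        + ∑ k ∈ Finset.univ.filter (fun k : Fin m => i < k),
            (2 : ℝ) ^ ((k : ℕ) - (i : ℕ) - 1) * Uhat⁻¹ j k := by
  rw [Matrix.mul_inv_rev, Matrix.inv_eq_right_inv (highamM_inv m), Matrix.mul_apply]
  have hsub : (insert i (Finset.univ.filter (fun k : Fin m => i < k))) ⊆ Finset.univ :=
    Finset.subset_univ _
  have hzero : ∀ x ∈ (Finset.univ : Finset (Fin m)),
      x ∉ insert i (Finset.univ.filter (fun k : Fin m => i < k)) →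
      Uhat⁻¹ j x * highamM m x i = 0 := by
    intro x _ hx
    simp only [Finset.mem_insert, Finset.mem_filter, Finset.mem_univ, true_and] at hx
    obtain ⟨h1x, h2x⟩ := not_or.mp hx
    simp only [highamM, Matrix.of_apply]
    rw [if_neg h1x, if_neg h2x, mul_zero]
  rw [← Finset.sum_subset hsub hzero, Finset.sum_insert (by simp)]
  congr 1
  · simp [highamM]
  · apply Finset.sum_congr rfl
    intro k hk
    simp only [Finset.mem_filter, Finset.mem_univ, true_and] at hk
    simp only [highamM, Matrix.of_apply]
    rw [if_neg hk.ne', if_pos hk]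
    ring
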